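/- Atomic forcing is local: (a) if (Jᵢ)ᵢ is a family of open subsets of ℝ and Jᵢ ⊩ σ = τ for every i, then (⋃ᵢ Jᵢ) ⊩ σ = τ, and similarly for ∈; (b) for open J ⊆ ℝ, J ⊩ σ = τ if and only if for every r ∈ J there is an open J' containing r with (J ∩ J') ⊩ σ = τ, and similarly for ∈. -/

import Mathlib

/-- Names over ℝ: a name is a family of pairs of a name and an open set of reals. -/
inductive Name : Type 1
  | mk (ι : Type) (elem : ι → Name) (cond : ι → Set ℝ) (hopen : ∀ i, IsOpen (cond i)) : Name

namespace Name

/-- The index type of the family of pairs of a name. -/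
def idx : Name → Type
  | mk ι _ _ _ => ι

/-- The name component of the `i`-th pair. -/
def elem : (σ : Name) → σ.idx → Name
  | mk _ e _ _ => e

/-- The open-set component of the `i`-th pair. -/
def cond : (σ : Name) → σ.idx → Set ℝ
  | mk _ _ c _ => c

theorem cond_isOpen : ∀ (σ : Name) (i : σ.idx), IsOpen (σ.cond i)
  | mk _ _ _ h => h

/-- Rank of a name, used for the recursive definition of forcing. -/
noncomputable def rank : Name → Ordinal.{0}
  | mk _ e _ _ => Ordinal.lsub fun i => rank (e i)

theorem rank_elem_lt : ∀ (σ : Name) (i : σ.idx), (σ.elem i).rank < σ.rank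
  | mk ι e c h, i => by
    simpa [rank, elem] using Ordinal.lt_lsub (fun i => rank (e i)) i

theorem measure_lt_left {a a' b : Ordinal.{0}} (h : a' < a) :
    Prod.Lex (· < ·) (· < ·) (max a' b, min a' b) (max a b, min a b) := by
  rcases le_or_gt a b with hab | hab
  · have h1 : max a' b = max a b := by
      rw [max_eq_right hab, max_eq_right (h.le.trans hab)]
    rw [h1]
    exact Prod.Lex.right _ (by rw [min_eq_left hab, min_eq_left (h.le.trans hab)]; exact h)
  · exact Prod.Lex.left _ _ (by rw [max_eq_left hab.le]; exact max_lt h hab)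

mutual
  /-- `feq σ τ J` means `J ⊩ σ = τ`. -/
  def feq (σ τ : Name) (J : Set ℝ) : Prop :=
    (∀ i : σ.idx, fmem (σ.elem i) τ (J ∩ σ.cond i)) ∧
    (∀ j : τ.idx, fmem (τ.elem j) σ (J ∩ τ.cond j))
  termination_by (max σ.rank τ.rank, min σ.rank τ.rank)
  decreasing_by
    · exact measure_lt_left (rank_elem_lt σ i)
    · rw [max_comm σ.rank, min_comm σ.rank]
      exact measure_lt_left (rank_elem_lt τ j)

  /-- `fmem σ τ J` means `J ⊩ σ ∈ τ`. -/
  def fmem (σ τ : Name) (J : Set ℝ) : Prop :=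
    ∀ r ∈ J, ∃ (j : τ.idx) (J' : Set ℝ), IsOpen J' ∧ r ∈ J' ∩ τ.cond j ∧
      feq σ (τ.elem j) (J' ∩ τ.cond j)
  termination_by (max σ.rank τ.rank, min σ.rank τ.rank)
  decreasing_by
    rw [max_comm σ.rank, min_comm σ.rank, max_comm σ.rank, min_comm σ.rank]
    exact measure_lt_left (rank_elem_lt τ j)
end

end Name

/-!
`J ⊩ σ ∈ τ` is a condition on each point `r ∈ J` separately, so it passes to unions at once.
`J ⊩ σ = τ` is a conjunction of statements `J ∩ Jᵢ ⊩ σᵢ ∈ τ`, and `(⋃ₖ Jₖ) ∩ Jᵢ = ⋃ₖ (Jₖ ∩ Jᵢ)`,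
so it passes to unions as well. Part (b) follows from (a), since `J` is the union of the sets
`J ∩ J'` given by the hypothesis.
-/

open Set

universe u

theorem Set.iff_forall_exists_inter_of_iUnion {α : Type u} [TopologicalSpace α]
    {P : Set α → Prop} (hP : ∀ {ι : Type u} {J : ι → Set α}, (∀ i, P (J i)) → P (⋃ i, J i))
    {J : Set α} : P J ↔ ∀ r ∈ J, ∃ J' : Set α, IsOpen J' ∧ r ∈ J' ∧ P (J ∩ J') := by
  refine ⟨fun h r _ => ⟨univ, isOpen_univ, mem_univ r, by rwa [inter_univ]⟩, fun h => ?_⟩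
  choose U _ hrU hU using h
  have hcover : J = ⋃ r : J, J ∩ U r.1 r.2 :=
    Subset.antisymm (fun r hr => mem_iUnion.mpr ⟨⟨r, hr⟩, hr, hrU r hr⟩)
      (iUnion_subset fun _ => inter_subset_left)
  rw [hcover]
  exact hP fun r : J => hU r.1 r.2

namespace Name

theorem fmem_iff (σ τ : Name) (J : Set ℝ) :
    fmem σ τ J ↔ ∀ r ∈ J, ∃ (j : τ.idx) (J' : Set ℝ), IsOpen J' ∧ r ∈ J' ∩ τ.cond j ∧
      feq σ (τ.elem j) (J' ∩ τ.cond j) := by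
  rw [fmem]

theorem feq_iff (σ τ : Name) (J : Set ℝ) :
    feq σ τ J ↔ (∀ i : σ.idx, fmem (σ.elem i) τ (J ∩ σ.cond i)) ∧
      (∀ j : τ.idx, fmem (τ.elem j) σ (J ∩ τ.cond j)) := by
  rw [feq]

theorem fmem_iUnion {ι : Sort*} {σ τ : Name} {J : ι → Set ℝ} (h : ∀ i, fmem σ τ (J i)) :
    fmem σ τ (⋃ i, J i) := by
  rw [fmem_iff]
  intro r hr
  obtain ⟨i, hi⟩ := mem_iUnion.mp hr
  exact (fmem_iff σ τ (J i)).mp (h i) r hi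

theorem feq_iUnion {ι : Sort*} {σ τ : Name} {J : ι → Set ℝ} (h : ∀ i, feq σ τ (J i)) :
    feq σ τ (⋃ i, J i) := by
  simp only [feq_iff, iUnion_inter] at h ⊢
  exact ⟨fun i => fmem_iUnion fun k => (h k).1 i, fun j => fmem_iUnion fun k => (h k).2 j⟩

end Name

theorem forces_local :
    (∀ (ι' : Type) (Js : ι' → Set ℝ), (∀ i, IsOpen (Js i)) → ∀ σ τ : Name,
      ((∀ i, Name.feq σ τ (Js i)) → Name.feq σ τ (⋃ i, Js i)) ∧
      ((∀ i, Name.fmem σ τ (Js i)) → Name.fmem σ τ (⋃ i, Js i))) ∧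
    (∀ (J : Set ℝ), IsOpen J → ∀ σ τ : Name,
      (Name.feq σ τ J ↔ ∀ r ∈ J, ∃ J' : Set ℝ, IsOpen J' ∧ r ∈ J' ∧ Name.feq σ τ (J ∩ J')) ∧
      (Name.fmem σ τ J ↔ ∀ r ∈ J, ∃ J' : Set ℝ, IsOpen J' ∧ r ∈ J' ∧ Name.fmem σ τ (J ∩ J'))) :=
  ⟨fun _ _ _ _ _ => ⟨Name.feq_iUnion, Name.fmem_iUnion⟩,
    fun _ _ _ _ => ⟨iff_forall_exists_inter_of_iUnion Name.feq_iUnion,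
      iff_forall_exists_inter_of_iUnion Name.fmem_iUnion⟩⟩
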